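/- Let A be an n×n essentially nonnegative real matrix (a^i_j ≥ 0 for i ≠ j) that is irreducible. Then for every t > 0, all entries of exp(tA) are strictly positive. -/

import Mathlib

open NormedSpace

/-- `A` is reducible if `n = 1` and `A = 0`, or `A` is cogredient (conjugate by a
permutation) to a block lower triangular matrix with square diagonal blocks, i.e. there
is a permutation `σ` and `0 < k < n` such that the corresponding top-right block
vanishes. -/
def Matrix.IsReducible {n : ℕ} (A : Matrix (Fin n) (Fin n) ℝ) : Prop :=
  (n = 1 ∧ A = 0) ∨
    ∃ (σ : Equiv.Perm (Fin n)) (k : ℕ), 0 < k ∧ k < n ∧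
      ∀ i j : Fin n, (i : ℕ) < k → k ≤ (j : ℕ) → A (σ i) (σ j) = 0

/-- `A` is irreducible if it is not reducible. -/
def Matrix.IsIrreducible' {n : ℕ} (A : Matrix (Fin n) (Fin n) ℝ) : Prop :=
  ¬ A.IsReducible

/-!
Shifting by a multiple of the identity, `t • A = B - c • 1` with `B` entrywise nonnegative, and
`exp (t • A) = e^{-c} exp B`. Irreducibility means that the digraph of nonzero off-diagonal entries
is strongly connected: otherwise the vertices reachable from some `i` span an invariant block.
A path from `i` to `j` of length `m` in the digraph of `B` gives `(B ^ m) i j > 0`, and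
`exp B i j` dominates the nonnegative term `(B ^ m) i j / m!` of its series.
-/

namespace Matrix

section Nonneg

variable {ι R : Type*} [Fintype ι] [DecidableEq ι]

open scoped Nat

theorem exists_add_smul_one_apply_nonneg [Ring R] [LinearOrder R] [IsOrderedRing R]
    {M : Matrix ι ι R} (hM : ∀ i j, i ≠ j → 0 ≤ M i j) : ∃ c : R, ∀ i j, 0 ≤ (M + c • 1) i j := by
  refine ⟨∑ k, |M k k|, fun i j => ?_⟩
  rcases eq_or_ne i j with rfl | hij
  · simp only [add_apply, smul_apply, one_apply_eq, smul_eq_mul, mul_one]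
    exact (add_abs_nonneg (M i i)).trans (add_le_add_right
      (Finset.single_le_sum (fun k _ => abs_nonneg (M k k)) (Finset.mem_univ i)) _)
  · simpa [one_apply_ne hij] using hM i j hij

theorem exists_pow_apply_pos [Semiring R] [PartialOrder R] [IsStrictOrderedRing R]
    {B : Matrix ι ι R} (hB : ∀ i j, 0 ≤ B i j) {i j : ι}
    (h : Relation.ReflTransGen (fun a b => 0 < B a b) i j) : ∃ m, 0 < (B ^ m) i j := by
  induction h with
  | refl => exact ⟨0, by simp⟩
  | @tail k j _ hkj ih =>
    obtain ⟨m, hm⟩ := ih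
    refine ⟨m + 1, ?_⟩
    rw [pow_succ, mul_apply]
    exact Finset.sum_pos' (fun l _ => mul_nonneg (pow_apply_nonneg hB m i l) (hB l j))
      ⟨k, Finset.mem_univ k, mul_pos hm hkj⟩

theorem inv_factorial_mul_pow_apply_le_exp_apply {B : Matrix ι ι ℝ} (hB : ∀ i j, 0 ≤ B i j)
    (m : ℕ) (i j : ι) : (m ! : ℝ)⁻¹ * (B ^ m) i j ≤ exp B i j := by
  -- Matrices carry no canonical norm; any algebra norm yields the exponential series.
  open scoped Norms.Operator in
  have hsum := Pi.hasSum.mp (Pi.hasSum.mp (exp_series_hasSum_exp' (𝕂 := ℝ) B) i) j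
  exact le_hasSum hsum m fun k _ => mul_nonneg (by positivity) (pow_apply_nonneg hB k i j)

theorem exp_apply_pos_of_reflTransGen {B : Matrix ι ι ℝ} (hB : ∀ i j, 0 ≤ B i j) {i j : ι}
    (h : Relation.ReflTransGen (fun a b => 0 < B a b) i j) : 0 < exp B i j := by
  obtain ⟨m, hm⟩ := exists_pow_apply_pos hB h
  exact (mul_pos (by positivity) hm).trans_le (inv_factorial_mul_pow_apply_le_exp_apply hB m i j)

theorem exp_add_smul_one (M : Matrix ι ι ℝ) (c : ℝ) :
    exp (M + c • 1) = Real.exp c • exp M := by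
  rw [exp_add_of_commute M _ ((Commute.one_right M).smul_right c), smul_one_eq_diagonal,
    exp_diagonal, Pi.exp_def, ← Real.exp_eq_exp_ℝ, ← smul_one_eq_diagonal, mul_smul_one]

end Nonneg

theorem isReducible_of_apply_eq_zero {n : ℕ} {A : Matrix (Fin n) (Fin n) ℝ} {T : Finset (Fin n)}
    (hT : T.Nonempty) (hT' : T ≠ Finset.univ) (hA : ∀ a ∈ T, ∀ b ∉ T, A a b = 0) :
    A.IsReducible := by
  have hk : T.card < n := by
    simpa using Finset.card_lt_card (Finset.ssubset_univ_iff.mpr hT')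
  -- `e.extendSubtype` maps the first `T.card` indices onto `T` and the others onto `Tᶜ`.
  let e : {i : Fin n // (i : ℕ) < T.card} ≃ {a // a ∈ T} :=
    (Fin.castLEquiv hk.le).symm.trans T.equivFin.symm
  refine Or.inr ⟨e.extendSubtype, T.card, hT.card_pos, hk, fun i j hi hj => ?_⟩
  exact hA _ (e.extendSubtype_mem i hi) _ (e.extendSubtype_not_mem j hj.not_gt)

theorem IsIrreducible'.reflTransGen {n : ℕ} {A : Matrix (Fin n) (Fin n) ℝ}
    (hA : A.IsIrreducible') (i j : Fin n) :
    Relation.ReflTransGen (fun a b => a ≠ b ∧ A a b ≠ 0) i j := by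
  classical
  by_contra hij
  let T := Finset.univ.filter (Relation.ReflTransGen (fun a b => a ≠ b ∧ A a b ≠ 0) i)
  have hjT : j ∉ T := by simpa [T] using hij
  refine hA (isReducible_of_apply_eq_zero (T := T) ⟨i, by simp [T, Relation.ReflTransGen.refl]⟩
    (fun hT => hjT (hT ▸ Finset.mem_univ j)) fun a ha b hb => ?_)
  by_contra hab
  have hne : a ≠ b := ne_of_mem_of_not_mem ha hb
  simp only [T, Finset.mem_filter, Finset.mem_univ, true_and] at ha hb
  exact hb (ha.tail ⟨hne, hab⟩)

end Matrix

open Matrix in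
/-- If `A` is essentially nonnegative (off-diagonal entries nonnegative) and
irreducible, then all entries of `exp (t • A)` are strictly positive for `t > 0`. -/
theorem exp_entries_pos_of_essentially_nonneg_irreducible (n : ℕ)
    (A : Matrix (Fin n) (Fin n) ℝ)
    (hA : ∀ i j : Fin n, i ≠ j → 0 ≤ A i j)
    (hirr : A.IsIrreducible') :
    ∀ t : ℝ, 0 < t → ∀ i j : Fin n, 0 < exp (t • A) i j := by
  intro t ht i j
  obtain ⟨c, hB⟩ := exists_add_smul_one_apply_nonneg fun a b hab => mul_nonneg ht.le (hA a b hab)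
  have hpath : Relation.ReflTransGen (fun a b => 0 < (t • A + c • 1) a b) i j := by
    refine Relation.ReflTransGen.mono (fun a b (hab : a ≠ b ∧ A a b ≠ 0) => ?_)
      _ _ (hirr.reflTransGen i j)
    simpa [one_apply_ne hab.1] using mul_pos ht ((hA a b hab.1).lt_of_ne' hab.2)
  have hexp : exp (t • A) = Real.exp (-c) • exp (t • A + c • 1) := by
    rw [← exp_add_smul_one, neg_smul, add_neg_cancel_right]
  rw [hexp]
  exact mul_pos (Real.exp_pos _) (exp_apply_pos_of_reflTransGen hB hpath)
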